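/- Let Δ be odd and not divisible by 3. Then for every s dividing Δ with s > 2, the number N_s of 2-cyclotomic cosets modulo 2^Δ−1 of size s is divisible by 6. -/

import Mathlib

/-- The 2-cyclotomic coset of `a` modulo `n`: the orbit of `a` under multiplication by 2. -/
def cycCoset (n : ℕ) (a : ZMod n) : Set (ZMod n) := {x | ∃ j : ℕ, x = 2 ^ j * a}

/-- The number of 2-cyclotomic cosets modulo `n` of size exactly `s`. -/
noncomputable def Ncos (n s : ℕ) : ℕ :=
  {C : Set (ZMod n) | (∃ a : ZMod n, C = cycCoset n a) ∧ C.ncard = s}.ncard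

/-! Let `n = 2 ^ Δ - 1` and write `T(s)` for the number of residues whose coset has size `s`,
so that `T(s) = s * Ncos n s`. For `d ∣ Δ` the residues with `2 ^ d * a = a` form the kernel
of multiplication by `2 ^ d - 1`, whence `∑_{e ∣ d} T(e) = 2 ^ d - 1 ≡ 1 (mod 3)` for odd `d`;
this forces `3 ∣ T(s)` for `s > 1`. Since `n` is odd, negation is an involution on these
residues fixing only `0`, so `T(s)` is even. As `s` is coprime to `6`, `6 ∣ Ncos n s`. -/

open Function Finset

theorem Function.ncard_range_iterate {α : Type*} {f : α → α} {x : α}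
    (hx : x ∈ periodicPts f) :
    (Set.range (f^[·] x)).ncard = minimalPeriod f x := by
  have hrange : Set.range (f^[·] x) = (f^[·] x) '' Set.Iio (minimalPeriod f x) := by
    refine subset_antisymm ?_ (Set.image_subset_range _ _)
    rintro _ ⟨j, rfl⟩
    exact ⟨j % minimalPeriod f x, Nat.mod_lt _ (minimalPeriod_pos_of_mem_periodicPts hx),
      iterate_mod_minimalPeriod_eq⟩
  rw [hrange, iterate_injOn_Iio_minimalPeriod.ncard_image, ← Finset.coe_Iio, Set.ncard_coe_finset,
    Nat.card_Iio]

theorem Function.range_iterate_eq_of_mem {α : Type*} {f : α → α} {x y : α}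
    (hx : x ∈ periodicPts f) (hy : y ∈ Set.range (f^[·] x)) :
    Set.range (f^[·] y) = Set.range (f^[·] x) := by
  obtain ⟨k, rfl⟩ := hy
  have hy : f^[k] x ∈ periodicPts f := by
    rw [← minimalPeriod_pos_iff_mem_periodicPts, minimalPeriod_apply_iterate hx]
    exact minimalPeriod_pos_of_mem_periodicPts hx
  ext z
  rw [Set.mem_range, Set.mem_range, ← mem_periodicOrbit_iff hy, ← mem_periodicOrbit_iff hx,
    periodicOrbit_apply_iterate_eq hx]

theorem ncard_classes_mul_eq_card {α : Type*} [Fintype α] (cls : α → Set α)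
    (mem_cls : ∀ a, a ∈ cls a) (cls_eq : ∀ a b, b ∈ cls a → cls b = cls a) (s : ℕ) :
    {C | (∃ a, C = cls a) ∧ C.ncard = s}.ncard * s = #{a | (cls a).ncard = s} := by
  classical
  have hclasses :
      {C | (∃ a, C = cls a) ∧ C.ncard = s} = ↑(image cls {a | (cls a).ncard = s}) := by
    ext C
    simp only [Set.mem_ofPred_eq, coe_image, coe_filter_univ, Set.mem_image]
    constructor
    · rintro ⟨⟨a, rfl⟩, ha⟩
      exact ⟨a, ha, rfl⟩
    · rintro ⟨a, ha, rfl⟩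
      exact ⟨⟨a, rfl⟩, ha⟩
  have hfiber : ∀ C ∈ image cls {a | (cls a).ncard = s},
      #{b ∈ {a | (cls a).ncard = s} | cls b = C} = s := by
    simp only [mem_image, mem_filter_univ]
    rintro _ ⟨a, ha, rfl⟩
    have : ({b ∈ {a | (cls a).ncard = s} | cls b = cls a} : Finset α) = (cls a).toFinset := by
      ext b
      simp only [mem_filter, mem_univ, true_and, Set.mem_toFinset]
      exact ⟨fun hb => hb.2 ▸ mem_cls b, fun hb => ⟨cls_eq a b hb ▸ ha, cls_eq a b hb⟩⟩
    rw [this, ← Set.ncard_eq_toFinset_card', ha]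
  rw [hclasses, Set.ncard_coe_finset, card_eq_sum_card_image cls, sum_congr rfl hfiber, sum_const,
    smul_eq_mul]

theorem Finset.even_card_of_involution {ι : Type*} {s : Finset ι} (g : ι → ι)
    (hg : ∀ a ∈ s, g a ∈ s) (hgg : ∀ a ∈ s, g (g a) = a) (hfree : ∀ a ∈ s, g a ≠ a) :
    Even #s := by
  rw [← ZMod.natCast_eq_zero_iff_even, card_eq_sum_ones, Nat.cast_sum, Nat.cast_one]
  exact sum_involution (fun a _ => g a) (fun _ _ => by decide) (fun a ha _ => hfree a ha) hg hgg

theorem eq_zero_of_forall_sum_divisors_eq {M : Type*} [AddCancelCommMonoid M] {f : ℕ → M}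
    {c : M} {s : ℕ} (h : ∀ d, d ∣ s → ∑ e ∈ d.divisors, f e = c) (hs : 1 < s) : f s = 0 := by
  induction s using Nat.strong_induction_on with
  | _ s ih =>
  have hproper : ∑ e ∈ s.properDivisors, f e = c := by
    rw [sum_eq_single 1]
    · simpa using h 1 (one_dvd s)
    · intro e he he1
      rw [Nat.mem_properDivisors] at he
      have he0 : e ≠ 0 := by rintro rfl; simp at he; omega
      exact ih e he.2 (fun d hd => h d (hd.trans he.1)) (by omega)
    · intro h1
      exact absurd (Nat.mem_properDivisors.2 ⟨one_dvd s, hs⟩) h1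
  have := h s dvd_rfl
  rw [← Nat.cons_self_properDivisors (by omega), sum_cons, hproper] at this
  exact add_eq_right.1 this

theorem ZMod.natCast_two_pow_sub_one_three {d : ℕ} (hd : Odd d) :
    ((2 ^ d - 1 : ℕ) : ZMod 3) = 1 := by
  rw [Nat.cast_sub Nat.one_le_two_pow, Nat.cast_pow, show ((2 : ℕ) : ZMod 3) = -1 from rfl,
    hd.neg_one_pow]
  decide

theorem ZMod.card_filter_natCast_mul_eq_zero {n c : ℕ} [NeZero n] (hc : c ∣ n) :
    #{a : ZMod n | (c : ZMod n) * a = 0} = c := by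
  have hc0 : c ≠ 0 := by rintro rfl; exact NeZero.ne n (zero_dvd_iff.1 hc)
  simp_rw [← nsmul_eq_mul]
  rw [← sum_card_addOrderOf_eq_card_nsmul_eq_zero hc0]
  calc ∑ m ∈ c.divisors, #{a : ZMod n | addOrderOf a = m} = ∑ m ∈ c.divisors, m.totient := by
        refine sum_congr rfl fun m hm => IsAddCyclic.card_addOrderOf_eq_totient ?_
        rw [ZMod.card]
        exact (Nat.dvd_of_mem_divisors hm).trans hc
    _ = c := Nat.sum_totient c

section CyclotomicCoset

open scoped Pointwise

variable {n : ℕ}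

theorem cycCoset_eq_range (a : ZMod n) : cycCoset n a = Set.range ((2 * ·)^[·] a) := by
  ext x
  simp only [cycCoset, Set.mem_ofPred_eq, Set.mem_range, mul_left_iterate, eq_comm]

theorem mem_cycCoset_self (a : ZMod n) : a ∈ cycCoset n a := ⟨0, by simp⟩

theorem cycCoset_zero : cycCoset n 0 = {0} := by
  ext x
  simp [cycCoset]

theorem cycCoset_neg (a : ZMod n) : cycCoset n (-a) = -cycCoset n a := by
  ext x
  simp only [cycCoset, Set.mem_neg, Set.mem_ofPred_eq, mul_neg, neg_eq_iff_eq_neg]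

theorem ZMod.two_pow_eq_one (Δ : ℕ) : (2 : ZMod (2 ^ Δ - 1)) ^ Δ = 1 := by
  have h := ZMod.natCast_self (2 ^ Δ - 1)
  rwa [Nat.cast_sub Nat.one_le_two_pow, sub_eq_zero, Nat.cast_pow, Nat.cast_ofNat,
    Nat.cast_one] at h

variable [NeZero n] (h2 : IsUnit (2 : ZMod n))
include h2

theorem mem_periodicPts_two_mul (a : ZMod n) : a ∈ periodicPts (2 * ·) :=
  h2.mul_right_injective.mem_periodicPts a

theorem ncard_cycCoset (a : ZMod n) : (cycCoset n a).ncard = minimalPeriod (2 * ·) a := by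
  rw [cycCoset_eq_range, ncard_range_iterate (mem_periodicPts_two_mul h2 a)]

theorem cycCoset_eq_of_mem {a b : ZMod n} (hb : b ∈ cycCoset n a) :
    cycCoset n b = cycCoset n a := by
  simp only [cycCoset_eq_range] at hb ⊢
  exact range_iterate_eq_of_mem (mem_periodicPts_two_mul h2 a) hb

theorem ncard_cycCoset_dvd_iff {a : ZMod n} {j : ℕ} :
    (cycCoset n a).ncard ∣ j ↔ 2 ^ j * a = a := by
  rw [ncard_cycCoset h2, ← isPeriodicPt_iff_minimalPeriod_dvd, IsPeriodicPt, IsFixedPt,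
    mul_left_iterate]

theorem Ncos_mul_eq_card (s : ℕ) : Ncos n s * s = #{a : ZMod n | (cycCoset n a).ncard = s} :=
  ncard_classes_mul_eq_card _ mem_cycCoset_self (fun _ _ => cycCoset_eq_of_mem h2) s

theorem even_card_ncard_cycCoset_eq {s : ℕ} (hs : s ≠ 1) :
    Even #{a : ZMod n | (cycCoset n a).ncard = s} := by
  refine even_card_of_involution Neg.neg (fun a ha => ?_) (fun a _ => neg_neg a)
    (fun a ha hneg => ?_)
  · simpa only [mem_filter_univ, cycCoset_neg, Set.ncard_neg] using ha
  · have ha0 : a = 0 := h2.mul_right_injective (by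
      simp only [mul_zero, two_mul]
      nth_rw 1 [← hneg]
      exact neg_add_cancel a)
    rw [mem_filter_univ, ha0, cycCoset_zero, Set.ncard_singleton] at ha
    exact hs ha.symm

theorem sum_card_ncard_cycCoset_eq {d : ℕ} (hd : 2 ^ d - 1 ∣ n) :
    ∑ e ∈ d.divisors, #{a : ZMod n | (cycCoset n a).ncard = e} = 2 ^ d - 1 := by
  have hd0 : d ≠ 0 := by
    rintro rfl
    exact NeZero.ne n (by simpa using hd)
  calc ∑ e ∈ d.divisors, #{a : ZMod n | (cycCoset n a).ncard = e}
      = #{a : ZMod n | (cycCoset n a).ncard ∣ d} := by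
        rw [card_eq_sum_card_fiberwise (f := fun a => (cycCoset n a).ncard) (t := d.divisors)
          (fun a ha => Nat.mem_divisors.2 ⟨(mem_filter.1 ha).2, hd0⟩)]
        refine sum_congr rfl fun e he => ?_
        rw [filter_filter]
        exact congrArg card <| filter_congr fun a _ => (and_iff_right_of_imp fun h : _ = e => by
          simpa only [h] using Nat.dvd_of_mem_divisors he).symm
    _ = #{a : ZMod n | ((2 ^ d - 1 : ℕ) : ZMod n) * a = 0} := by
        congr 1
        ext a
        rw [mem_filter_univ, mem_filter_univ, ncard_cycCoset_dvd_iff h2,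
          Nat.cast_sub Nat.one_le_two_pow]
        push_cast
        rw [sub_mul, one_mul, sub_eq_zero]
    _ = 2 ^ d - 1 := ZMod.card_filter_natCast_mul_eq_zero hd

theorem three_dvd_card_ncard_cycCoset_eq {s : ℕ} (hs : Odd s) (hs1 : 1 < s)
    (hsn : 2 ^ s - 1 ∣ n) : 3 ∣ #{a : ZMod n | (cycCoset n a).ncard = s} := by
  rw [← ZMod.natCast_eq_zero_iff]
  refine eq_zero_of_forall_sum_divisors_eq
    (f := fun e => (#{a : ZMod n | (cycCoset n a).ncard = e} : ZMod 3)) (c := 1)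
    (fun d hd => ?_) hs1
  rw [← Nat.cast_sum,
    sum_card_ncard_cycCoset_eq h2 ((Nat.pow_sub_one_dvd_pow_sub_one 2 hd).trans hsn),
    ZMod.natCast_two_pow_sub_one_three (hs.of_dvd_nat hd)]

end CyclotomicCoset

theorem six_dvd_Ncos (Δ s : ℕ) (hΔodd : Odd Δ) (hΔ3 : ¬ 3 ∣ Δ)
    (hsd : s ∣ Δ) (hs : 2 < s) :
    6 ∣ Ncos (2 ^ Δ - 1) s := by
  have hΔ0 : Δ ≠ 0 := hΔodd.pos.ne'
  have : NeZero (2 ^ Δ - 1) := ⟨by have := Nat.one_lt_two_pow hΔ0; omega⟩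
  have h2 : IsUnit (2 : ZMod (2 ^ Δ - 1)) := .of_pow_eq_one (ZMod.two_pow_eq_one Δ) hΔ0
  have hs_odd : Odd s := hΔodd.of_dvd_nat hsd
  have h6 : 6 ∣ Ncos (2 ^ Δ - 1) s * s := by
    rw [Ncos_mul_eq_card h2]
    exact Nat.Coprime.mul_dvd_of_dvd_of_dvd (by norm_num : Nat.Coprime 2 3)
      (even_card_ncard_cycCoset_eq h2 (by omega)).two_dvd
      (three_dvd_card_ncard_cycCoset_eq h2 hs_odd (by omega)
        (Nat.pow_sub_one_dvd_pow_sub_one 2 hsd))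
  have hcop : Nat.Coprime 6 s := Nat.Coprime.mul_left (hs_odd.coprime_two_right.symm)
    ((Nat.Prime.coprime_iff_not_dvd Nat.prime_three).2 fun h => hΔ3 (h.trans hsd))
  exact hcop.dvd_of_dvd_mul_right h6
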